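/- arXiv:2504.19953 — 4 statements merged into one kernel-verified Lean document; each statement's English description precedes it below -/
import Mathlib

section
/- For any two random variables X and S on a common probability space with continuous marginal distribution function F_X for X, and any prudence level p in (0,1), the conditional expectation E[X | S > VaR_p(S)] is at most ES_p(X) = E[X | X > VaR_p(X)]. -/
/-!
Let `q = VaR_p(X)` and `B = {X > q}`. Continuity of the distribution function of `X` gives
`P(X ≤ q) = p`, so `B` has the same probability `1 - p` as `A = {S > VaR_p(S)}`. Since `X - q` is
positive exactly on `B`, the pointwise bound `1_A (X - q) ≤ 1_B (X - q)` integrates to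
`∫_A X - (1 - p) q ≤ ∫_B X - (1 - p) q`, and dividing by `1 - p` gives the claim.
-/

open MeasureTheory ProbabilityTheory Filter Topology Set

/-- Value-at-Risk: the `p`-quantile of `X` under `μ`. -/
noncomputable def VaR {Ω : Type*} [MeasurableSpace Ω] (μ : Measure Ω) (X : Ω → ℝ) (p : ℝ) : ℝ :=
  sInf {x : ℝ | p ≤ (μ {ω | X ω ≤ x}).toReal}

/-- Conditional expectation of `X` given an event `A`. -/
noncomputable def condExpEvent {Ω : Type*} [MeasurableSpace Ω] (μ : Measure Ω) (X : Ω → ℝ)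
    (A : Set Ω) : ℝ :=
  (∫ ω in A, X ω ∂μ) / (μ A).toReal

lemma apply_csInf_setOf_le_eq {F : ℝ → ℝ} (hF : Continuous F) {p : ℝ}
    (hbot : ∀ᶠ x in atBot, F x < p) (hne : ∃ x, p ≤ F x) :
    F (sInf {x | p ≤ F x}) = p := by
  set T := {x | p ≤ F x}
  obtain ⟨M, hM⟩ := eventually_atBot.mp hbot
  have hTbdd : BddBelow T := ⟨M, fun x hx => le_of_not_gt fun hxM => (hM x hxM.le).not_ge hx⟩
  have hlt : ∀ x < sInf T, F x < p := fun x hx => lt_of_not_ge fun h => hx.not_ge (csInf_le hTbdd h)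
  refine le_antisymm ?_ ((isClosed_le continuous_const hF).csInf_mem hne hTbdd)
  exact le_of_tendsto (x := 𝓝[<] sInf T) hF.continuousAt.continuousWithinAt
    (eventually_nhdsWithin_of_forall fun x hx => (hlt x hx).le)

lemma measure_le_VaR_eq {Ω : Type*} [MeasurableSpace Ω] (μ : Measure Ω) [IsProbabilityMeasure μ]
    {X : Ω → ℝ} (hX : Measurable X) (hcont : Continuous fun x : ℝ => (μ {ω | X ω ≤ x}).toReal)
    {p : ℝ} (hp : p ∈ Ioo (0 : ℝ) 1) :
    (μ {ω | X ω ≤ VaR μ X p}).toReal = p := by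
  have := Measure.isProbabilityMeasure_map (μ := μ) hX.aemeasurable
  have hcdf : ∀ x, (μ {ω | X ω ≤ x}).toReal = cdf (μ.map X) x := by
    intro x
    rw [cdf_eq_real, measureReal_def, Measure.map_apply hX measurableSet_Iic]
    rfl
  refine apply_csInf_setOf_le_eq hcont ?_ ?_
  · simp_rw [hcdf]
    exact (tendsto_cdf_atBot _).eventually (eventually_lt_nhds hp.1)
  · simp_rw [hcdf]
    exact ((tendsto_cdf_atTop _).eventually (eventually_ge_nhds hp.2)).exists

lemma setIntegral_le_setIntegral_of_measure_eq_superlevel {Ω : Type*} [MeasurableSpace Ω]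
    {μ : Measure Ω} {X : Ω → ℝ} (hX : Measurable X) (hXint : Integrable X μ) {A : Set Ω}
    (hA : MeasurableSet A) (hAfin : μ A ≠ ⊤) (q : ℝ) (hAB : μ A = μ {ω | q < X ω}) :
    ∫ ω in A, X ω ∂μ ≤ ∫ ω in {ω | q < X ω}, X ω ∂μ := by
  set B := {ω | q < X ω}
  have hB : MeasurableSet B := measurableSet_lt measurable_const hX
  have hshift : ∀ s, MeasurableSet s → μ s ≠ ⊤ →
      ∫ ω, s.indicator (fun ω => X ω - q) ω ∂μ = ∫ ω in s, X ω ∂μ - (μ s).toReal * q := by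
    intro s hs hsfin
    rw [integral_indicator hs, integral_sub hXint.integrableOn (integrableOn_const hsfin),
      setIntegral_const, smul_eq_mul, measureReal_def]
  have hpointwise : ∀ ω, A.indicator (fun ω => X ω - q) ω ≤ B.indicator (fun ω => X ω - q) ω := by
    intro ω
    by_cases hωB : q < X ω
    · rw [indicator_of_mem (show ω ∈ B from hωB)]
      exact indicator_le_self' (fun _ _ => (sub_pos.mpr hωB).le) ω
    · rw [indicator_of_notMem (show ω ∉ B from hωB)]
      exact indicator_nonpos (fun _ _ => sub_nonpos.mpr (not_lt.mp hωB)) ω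
  have hint : ∀ s, MeasurableSet s → μ s ≠ ⊤ →
      Integrable (s.indicator fun ω => X ω - q) μ := fun s hs hsfin =>
    (hXint.integrableOn.sub (integrableOn_const hsfin)).integrable_indicator hs
  have := integral_mono (hint A hA hAfin) (hint B hB (hAB ▸ hAfin)) hpointwise
  rw [hshift A hA hAfin, hshift B hB (hAB ▸ hAfin), hAB] at this
  linarith

/-- E[X | S > VaR_p(S)] ≤ ES_p(X) = E[X | X > VaR_p(X)] when the CDF of X
is continuous and P(S > VaR_p(S)) = 1 - p > 0. -/
theorem mes_le_es {Ω : Type*} [MeasurableSpace Ω] (μ : Measure Ω) [IsProbabilityMeasure μ]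
    (X S : Ω → ℝ) (hX : Measurable X) (hS : Measurable S)
    (hXint : Integrable X μ)
    (hcont : Continuous fun x : ℝ => (μ {ω | X ω ≤ x}).toReal)
    (p : ℝ) (hp : p ∈ Set.Ioo (0 : ℝ) 1)
    (htail : (μ {ω | S ω > VaR μ S p}).toReal = 1 - p) :
    condExpEvent μ X {ω | S ω > VaR μ S p} ≤ condExpEvent μ X {ω | X ω > VaR μ X p} := by
  set A := {ω | S ω > VaR μ S p}
  have hB : {ω | X ω > VaR μ X p} = {ω | X ω ≤ VaR μ X p}ᶜ := by ext; simp
  have hBtail : (μ {ω | X ω > VaR μ X p}).toReal = 1 - p := by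
    rw [hB, ← measureReal_def, probReal_compl_eq_one_sub (measurableSet_le hX measurable_const),
      measureReal_def, measure_le_VaR_eq μ hX hcont hp]
  have hAB : μ A = μ {ω | VaR μ X p < X ω} :=
    (ENNReal.toReal_eq_toReal_iff' (measure_ne_top _ _) (measure_ne_top _ _)).mp
      (htail.trans hBtail.symm)
  unfold condExpEvent
  rw [htail, hBtail]
  exact div_le_div_of_nonneg_right
    (setIntegral_le_setIntegral_of_measure_eq_superlevel hX hXint
      (measurableSet_lt measurable_const hS) (measure_ne_top _ _) _ hAB)
    (sub_pos.mpr hp.2).le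
end

section
/- For any two integrable random variables X and S on a common probability space with X having continuous distribution function, and any p in (0,1), the conditional expectation E[X | S > VaR_p(S)] is at least LES_{1-p}(X) = E[X | X ≤ VaR_{1-p}(X)]. -/
open MeasureTheory

/-!
Let `v = VaR_{1-p}(X)`. Continuity of the distribution function of `X` gives
`P(X ≤ v) = 1 - p = P(S > VaR_p(S))`, so the events `A = {X ≤ v}` and `B = {S > VaR_p(S)}` have
the same probability, hence so do `A \ B` and `B \ A`. On `A \ B` we have `X ≤ v` and on `B \ A`
we have `X > v`, so `∫_A X ≤ ∫_B X`; dividing by the common probability `1 - p` gives the claim.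
-/

theorem setIntegral_le_setIntegral_of_measure_eq {Ω : Type*} [MeasurableSpace Ω] {μ : Measure Ω}
    {X : Ω → ℝ} {A B : Set Ω} (hA : MeasurableSet A) (hB : MeasurableSet B)
    (hAB : μ A = μ B) (hμA : μ A ≠ ⊤) (hXA : IntegrableOn X A μ) (hXB : IntegrableOn X B μ)
    {v : ℝ} (hle : ∀ ω ∈ A, X ω ≤ v) (hge : ∀ ω ∈ B \ A, v ≤ X ω) :
    ∫ ω in A, X ω ∂μ ≤ ∫ ω in B, X ω ∂μ := by
  have hμB : μ B ≠ ⊤ := hAB ▸ hμA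
  have hdiff : μ.real (A \ B) = μ.real (B \ A) :=
    congrArg ENNReal.toReal <| measure_sdiff_symm hA.nullMeasurableSet hB.nullMeasurableSet hAB
      (measure_ne_top_of_subset Set.inter_subset_left hμA)
  have hAB_le : ∫ ω in A \ B, X ω ∂μ ≤ v * μ.real (A \ B) :=
    calc ∫ ω in A \ B, X ω ∂μ ≤ ∫ _ in A \ B, v ∂μ :=
          setIntegral_mono_on (hXA.mono_set Set.sdiff_subset)
            (integrableOn_const (measure_ne_top_of_subset Set.sdiff_subset hμA)) (hA.diff hB)
            fun ω hω => hle ω hω.1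
      _ = v * μ.real (A \ B) := by rw [setIntegral_const, smul_eq_mul, mul_comm]
  have hBA_ge : v * μ.real (B \ A) ≤ ∫ ω in B \ A, X ω ∂μ :=
    setIntegral_ge_of_const_le_real (hB.diff hA) (measure_ne_top_of_subset Set.sdiff_subset hμB)
      hge (hXB.mono_set Set.sdiff_subset)
  rw [← integral_inter_add_sdiff hB hXA, ← integral_inter_add_sdiff hA hXB, Set.inter_comm B A]
  rw [hdiff] at hAB_le
  linarith

theorem apply_sInf_setOf_le_apply_eq {F : ℝ → ℝ} (hF : Continuous F) {q : ℝ}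
    (hne : ∃ x, q ≤ F x) (hbdd : BddBelow {x | q ≤ F x}) :
    F (sInf {x | q ≤ F x}) = q := by
  set m := sInf {x | q ≤ F x}
  have hm : q ≤ F m := (isClosed_le continuous_const hF).csInf_mem hne hbdd
  refine le_antisymm (not_lt.1 fun hlt => ?_) hm
  -- `F > q` persists slightly to the left of `m`, below the infimum.
  obtain ⟨x, hxq, hxm⟩ :=
    ((eventually_nhdsWithin_of_eventually_nhds (hF.continuousAt.eventually_const_lt hlt)).and
      (self_mem_nhdsWithin : Set.Iio m ∈ nhdsWithin m (Set.Iio m))).exists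
  exact (not_le.2 hxm) (csInf_le hbdd hxq.le)

theorem measure_le_VaR_of_continuous {Ω : Type*} [MeasurableSpace Ω] {μ : Measure Ω}
    [IsProbabilityMeasure μ] {X : Ω → ℝ} (hX : AEMeasurable X μ)
    (hcont : Continuous fun x : ℝ => (μ {ω | X ω ≤ x}).toReal) {q : ℝ} (hq0 : 0 < q) (hq1 : q < 1) :
    (μ {ω | X ω ≤ VaR μ X q}).toReal = q := by
  set F : ℝ → ℝ := fun x => (μ {ω | X ω ≤ x}).toReal
  have : IsProbabilityMeasure (μ.map X) := Measure.isProbabilityMeasure_map hX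
  have hF : F = ProbabilityTheory.cdf (μ.map X) := by
    ext x
    rw [ProbabilityTheory.cdf_eq_real, measureReal_def, Measure.map_apply_of_aemeasurable hX
      measurableSet_Iic]
    rfl
  have hFtop : Filter.Tendsto F Filter.atTop (nhds 1) :=
    hF ▸ ProbabilityTheory.tendsto_cdf_atTop (μ.map X)
  have hFbot : Filter.Tendsto F Filter.atBot (nhds 0) :=
    hF ▸ ProbabilityTheory.tendsto_cdf_atBot (μ.map X)
  obtain ⟨b, hb⟩ := (hFbot.eventually_lt_const hq0).exists_forall_of_atBot
  refine apply_sInf_setOf_le_apply_eq hcont ?_ ⟨b, fun x hx => ?_⟩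
  · obtain ⟨x, hx⟩ := (hFtop.eventually_const_lt hq1).exists
    exact ⟨x, hx.le⟩
  · exact le_of_not_ge fun hxb => (not_le.2 (hb x hxb)) hx

theorem les_le_mes_general {Ω : Type*} [MeasurableSpace Ω] (μ : Measure Ω) [IsProbabilityMeasure μ]
    (X S : Ω → ℝ) (hX : Measurable X) (hS : Measurable S)
    (hXint : Integrable X μ)
    (hcont : Continuous fun x : ℝ => (μ {ω | X ω ≤ x}).toReal)
    (p : ℝ) (hp : p ∈ Set.Ioo (0 : ℝ) 1)
    (htail : (μ {ω | S ω > VaR μ S p}).toReal = 1 - p) :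
    condExpEvent μ X {ω | X ω ≤ VaR μ X (1 - p)} ≤ condExpEvent μ X {ω | S ω > VaR μ S p} := by
  obtain ⟨hp0, hp1⟩ := hp
  have hlower : (μ {ω | X ω ≤ VaR μ X (1 - p)}).toReal = 1 - p :=
    measure_le_VaR_of_continuous hX.aemeasurable hcont (by linarith) (by linarith)
  have hint : ∫ ω in {ω | X ω ≤ VaR μ X (1 - p)}, X ω ∂μ ≤ ∫ ω in {ω | S ω > VaR μ S p}, X ω ∂μ :=
    setIntegral_le_setIntegral_of_measure_eq (measurableSet_le hX measurable_const)
      (measurableSet_lt measurable_const hS)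
      ((ENNReal.toReal_eq_toReal_iff' (measure_ne_top _ _) (measure_ne_top _ _)).1
        (hlower.trans htail.symm))
      (measure_ne_top _ _) hXint.integrableOn hXint.integrableOn
      (fun _ hω => hω) (fun _ hω => (not_le.1 hω.2).le)
  unfold condExpEvent
  rw [hlower, htail]
  gcongr

/-- LES_{1-p}(X) = E[X | X ≤ VaR_{1-p}(X)] ≤ E[X | S > VaR_p(S)] when the CDF
of X is continuous and P(S > VaR_p(S)) = 1 - p > 0. -/
theorem les_le_mes {Ω : Type*} [MeasurableSpace Ω] (μ : Measure Ω) [IsProbabilityMeasure μ]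
    (X S : Ω → ℝ) (hX : Measurable X) (hS : Measurable S)
    (hXint : Integrable X μ) (hSint : Integrable S μ)
    (hcont : Continuous fun x : ℝ => (μ {ω | X ω ≤ x}).toReal)
    (p : ℝ) (hp : p ∈ Set.Ioo (0 : ℝ) 1)
    (htail : (μ {ω | S ω > VaR μ S p}).toReal = 1 - p) :
    condExpEvent μ X {ω | X ω ≤ VaR μ X (1 - p)} ≤ condExpEvent μ X {ω | S ω > VaR μ S p} :=
  les_le_mes_general μ X S hX hS hXint hcont p hp htail
end

section
/- Jointly mixable construction for uniforms: with U ~ Unif[0,1], define Y_1 = U; Y_2 = 1-2U if U ≤ 1/2 and 2-2U if U > 1/2; Y_3 = U+1/2 if U ≤ 1/2 and U-1/2 if U > 1/2. Then each Y_i is uniformly distributed on [0,1] and Y_1 + Y_2 + Y_3 = 3/2 almost surely. -/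
open MeasureTheory
open scoped ENNReal

/-- the jointly mixable construction for three uniforms: each `Y_i` is
uniformly distributed on `[0,1]` and `Y₁ + Y₂ + Y₃ = 3/2` almost surely. -/
theorem jointly_mixable_uniforms {Ω : Type*} [MeasurableSpace Ω] (μ : Measure Ω)
    [IsProbabilityMeasure μ] (U : Ω → ℝ) (hU : Measurable U)
    (hUnif : ∀ t ∈ Set.Icc (0 : ℝ) 1, (μ {ω | U ω ≤ t}).toReal = t)
    (Y₁ Y₂ Y₃ : Ω → ℝ)
    (hY₁ : ∀ ω, Y₁ ω = U ω)
    (hY₂ : ∀ ω, Y₂ ω = if U ω ≤ 1 / 2 then 1 - 2 * U ω else 2 - 2 * U ω)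
    (hY₃ : ∀ ω, Y₃ ω = if U ω ≤ 1 / 2 then U ω + 1 / 2 else U ω - 1 / 2) :
    (∀ t ∈ Set.Icc (0 : ℝ) 1, (μ {ω | Y₁ ω ≤ t}).toReal = t) ∧
    (∀ t ∈ Set.Icc (0 : ℝ) 1, (μ {ω | Y₂ ω ≤ t}).toReal = t) ∧
    (∀ t ∈ Set.Icc (0 : ℝ) 1, (μ {ω | Y₃ ω ≤ t}).toReal = t) ∧
    (∀ᵐ ω ∂μ, Y₁ ω + Y₂ ω + Y₃ ω = 3 / 2) := by
  have hmle : ∀ a : ℝ, MeasurableSet {ω | U ω ≤ a} := fun a =>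
    measurableSet_le hU measurable_const
  have hmlt : ∀ a : ℝ, MeasurableSet {ω | U ω < a} := fun a =>
    measurableSet_lt hU measurable_const
  have hmge : ∀ a : ℝ, MeasurableSet {ω | a ≤ U ω} := fun a =>
    measurableSet_le measurable_const hU
  have hF : ∀ a ∈ Set.Icc (0:ℝ) 1, μ {ω | U ω ≤ a} = ENNReal.ofReal a := by
    intro a ha
    rw [← ENNReal.ofReal_toReal (measure_ne_top μ {ω | U ω ≤ a}), hUnif a ha]
  have h0 : μ {ω | U ω ≤ 0} = 0 := by simpa using hF 0 (by norm_num)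
  have h1 : μ {ω | U ω ≤ 1} = 1 := by rw [hF 1 (by norm_num)]; simp
  -- no atoms in [0,1]
  have hpt : ∀ a ∈ Set.Icc (0:ℝ) 1, μ {ω | U ω = a} = 0 := by
    intro a ha
    rcases eq_or_lt_of_le ha.1 with h | h
    · have hsub : {ω | U ω = a} ⊆ {ω | U ω ≤ 0} := by
        intro ω hω
        simp only [Set.mem_setOf_eq] at hω ⊢
        rw [hω, ← h]
      exact measure_mono_null hsub h0
    · have key : ∀ ε : ℝ, 0 < ε → ε ≤ a → μ {ω | U ω = a} ≤ ENNReal.ofReal ε := by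
        intro ε hε hεa
        have hsub : {ω | U ω = a} ⊆ {ω | U ω ≤ a} \ {ω | U ω ≤ a - ε} := by
          intro ω hω
          simp only [Set.mem_setOf_eq] at hω
          refine ⟨hω.le, ?_⟩
          simp only [Set.mem_setOf_eq, hω]
          push_neg
          linarith
        have hsub2 : {ω | U ω ≤ a - ε} ⊆ {ω | U ω ≤ a} := by
          intro ω hω
          simp only [Set.mem_setOf_eq] at hω ⊢
          linarith
        calc μ {ω | U ω = a} ≤ μ ({ω | U ω ≤ a} \ {ω | U ω ≤ a - ε}) := measure_mono hsub
          _ = μ {ω | U ω ≤ a} - μ {ω | U ω ≤ a - ε} :=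
              measure_diff hsub2 ((hmle _).nullMeasurableSet) (measure_ne_top μ _)
          _ = ENNReal.ofReal a - ENNReal.ofReal (a - ε) := by
              rw [hF a ha, hF (a - ε) ⟨by linarith, by linarith [ha.2]⟩]
          _ = ENNReal.ofReal (a - (a - ε)) := (ENNReal.ofReal_sub _ (by linarith)).symm
          _ = ENNReal.ofReal ε := by ring_nf
      by_contra hne
      have hpos : 0 < (μ {ω | U ω = a}).toReal :=
        ENNReal.toReal_pos hne (measure_ne_top μ _)
      set c := (μ {ω | U ω = a}).toReal with hc
      have hmin : 0 < min (c / 2) a := lt_min (by linarith) h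
      have hkey := key (min (c / 2) a) hmin (min_le_right _ _)
      have h2 : c ≤ min (c / 2) a :=
        ENNReal.toReal_le_of_le_ofReal hmin.le hkey
      have h3 := min_le_left (c / 2) a
      linarith
  -- CDF for all reals
  have hFall : ∀ a : ℝ, μ {ω | U ω ≤ a} = ENNReal.ofReal (min a 1) := by
    intro a
    rcases lt_or_ge a 0 with h | h
    · have hsub : {ω | U ω ≤ a} ⊆ {ω | U ω ≤ 0} := by
        intro ω hω
        simp only [Set.mem_setOf_eq] at hω ⊢
        linarith
      rw [min_eq_left (by linarith), measure_mono_null hsub h0]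
      exact (ENNReal.ofReal_eq_zero.2 h.le).symm
    · rcases le_or_gt a 1 with h' | h'
      · rw [min_eq_left h', hF a ⟨h, h'⟩]
      · rw [min_eq_right h'.le]
        have hsub : {ω | U ω ≤ 1} ⊆ {ω | U ω ≤ a} := by
          intro ω hω
          simp only [Set.mem_setOf_eq] at hω ⊢
          linarith
        have hle : μ {ω | U ω ≤ a} ≤ 1 := prob_le_one
        have hge : (1 : ℝ≥0∞) ≤ μ {ω | U ω ≤ a} := h1 ▸ measure_mono hsub
        simpa using le_antisymm hle hge
  have hltall : ∀ a : ℝ, μ {ω | U ω < a} = ENNReal.ofReal (min a 1) := by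
    intro a
    rcases le_or_gt a 0 with h | h
    · have hsub : {ω | U ω < a} ⊆ {ω | U ω ≤ 0} := by
        intro ω hω
        simp only [Set.mem_setOf_eq] at hω ⊢
        linarith
      rw [min_eq_left (by linarith), measure_mono_null hsub h0]
      exact (ENNReal.ofReal_eq_zero.2 h).symm
    · rcases le_or_gt a 1 with h' | h'
      · rw [min_eq_left h']
        refine le_antisymm ?_ ?_
        · rw [← hF a ⟨h.le, h'⟩]
          refine measure_mono fun ω hω => ?_
          simp only [Set.mem_setOf_eq] at hω ⊢
          exact hω.le
        · have hsplit : {ω | U ω ≤ a} ⊆ {ω | U ω < a} ∪ {ω | U ω = a} := by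
            intro ω hω
            simp only [Set.mem_setOf_eq] at hω
            simpa [Set.mem_union, Set.mem_setOf_eq] using lt_or_eq_of_le hω
          calc ENNReal.ofReal a = μ {ω | U ω ≤ a} := (hF a ⟨h.le, h'⟩).symm
            _ ≤ μ {ω | U ω < a} + μ {ω | U ω = a} :=
                le_trans (measure_mono hsplit) (measure_union_le _ _)
            _ = μ {ω | U ω < a} := by rw [hpt a ⟨h.le, h'⟩, add_zero]
      · rw [min_eq_right h'.le]
        have hsub : {ω | U ω ≤ 1} ⊆ {ω | U ω < a} := by
          intro ω hω
          simp only [Set.mem_setOf_eq] at hω ⊢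
          linarith
        have hle : μ {ω | U ω < a} ≤ 1 := prob_le_one
        have hge : (1 : ℝ≥0∞) ≤ μ {ω | U ω < a} := h1 ▸ measure_mono hsub
        simpa using le_antisymm hle hge
  have hgeall : ∀ a : ℝ, μ {ω | a ≤ U ω} = 1 - ENNReal.ofReal (min a 1) := by
    intro a
    have hset : {ω | a ≤ U ω} = {ω | U ω < a}ᶜ := by
      ext ω; simp [not_lt]
    rw [hset, measure_compl (hmlt a) (measure_ne_top μ _), measure_univ, hltall a]
  refine ⟨?_, ?_, ?_, ?_⟩
  · -- Y₁
    intro t ht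
    have hset : {ω | Y₁ ω ≤ t} = {ω | U ω ≤ t} := by ext ω; simp [hY₁]
    rw [hset]; exact hUnif t ht
  · -- Y₂
    rintro t ⟨ht0, ht1⟩
    set A := {ω | U ω ≤ 1/2} \ {ω | U ω < (1-t)/2} with hA
    set B := {ω | 1 - t/2 ≤ U ω} \ {ω | U ω ≤ 1/2} with hB
    have hset : {ω | Y₂ ω ≤ t} = A ∪ B := by
      ext ω
      simp only [hA, hB, Set.mem_union, Set.mem_diff, Set.mem_setOf_eq, hY₂, not_lt, not_le]
      split_ifs with h
      · constructor
        · intro h2; exact Or.inl ⟨h, by linarith⟩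
        · rintro (⟨h1, h2⟩ | ⟨h1, h2⟩) <;> linarith
      · push_neg at h
        constructor
        · intro h2; exact Or.inr ⟨by linarith, h⟩
        · rintro (⟨h1, h2⟩ | ⟨h1, h2⟩) <;> linarith
    have hμA : μ A = ENNReal.ofReal (t/2) := by
      have hsub : {ω | U ω < (1-t)/2} ⊆ {ω | U ω ≤ 1/2} := by
        intro ω hω
        simp only [Set.mem_setOf_eq] at hω ⊢
        linarith
      rw [hA, measure_diff hsub ((hmlt _).nullMeasurableSet) (measure_ne_top μ _),
          hF (1/2) ⟨by norm_num, by norm_num⟩, hltall,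
          min_eq_left (by linarith : (1-t)/2 ≤ 1),
          ← ENNReal.ofReal_sub _ (by linarith : (0:ℝ) ≤ (1-t)/2)]
      ring_nf
    have hμB : μ B = ENNReal.ofReal (t/2) := by
      have hBB : μ B = μ {ω | 1 - t/2 ≤ U ω} := by
        refine le_antisymm (measure_mono Set.diff_subset) ?_
        have hsub : {ω | 1 - t/2 ≤ U ω} ⊆ B ∪ {ω | U ω = 1 - t/2} := by
          intro ω hω
          simp only [Set.mem_setOf_eq] at hω
          rcases le_or_gt (U ω) (1/2) with h | h
          · exact Or.inr (le_antisymm (by linarith) hω)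
          · exact Or.inl ⟨hω, not_le.2 h⟩
        calc μ {ω | 1 - t/2 ≤ U ω} ≤ μ B + μ {ω | U ω = 1 - t/2} :=
              le_trans (measure_mono hsub) (measure_union_le _ _)
          _ = μ B := by rw [hpt (1 - t/2) ⟨by linarith, by linarith⟩, add_zero]
      rw [hBB, hgeall, min_eq_left (by linarith : 1 - t/2 ≤ 1),
          show (1:ℝ≥0∞) = ENNReal.ofReal 1 by simp,
          ← ENNReal.ofReal_sub _ (by linarith : (0:ℝ) ≤ 1 - t/2)]
      ring_nf
    have hdisj : Disjoint A B := by
      rw [Set.disjoint_left]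
      rintro ω ⟨h1, _⟩ ⟨_, h2⟩
      exact h2 h1
    have hBm : MeasurableSet B := (hmge _).diff (hmle _)
    rw [hset, measure_union hdisj hBm, hμA, hμB,
        ← ENNReal.ofReal_add (by linarith) (by linarith),
        show t/2 + t/2 = t by ring]
    exact ENNReal.toReal_ofReal ht0
  · -- Y₃
    rintro t ⟨ht0, ht1⟩
    set A := {ω | U ω ≤ t - 1/2} with hA
    set B := {ω | U ω ≤ t + 1/2} \ {ω | U ω ≤ 1/2} with hB
    have hset : {ω | Y₃ ω ≤ t} = A ∪ B := by
      ext ω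
      simp only [hA, hB, Set.mem_union, Set.mem_diff, Set.mem_setOf_eq, hY₃, not_le]
      split_ifs with h
      · constructor
        · intro h2; exact Or.inl (by linarith)
        · rintro (h1 | ⟨h1, h2⟩) <;> linarith
      · push_neg at h
        constructor
        · intro h2; exact Or.inr ⟨by linarith, h⟩
        · rintro (h1 | ⟨h1, h2⟩) <;> linarith
    have hμA : μ A = ENNReal.ofReal (t - 1/2) := by
      rw [hA, hFall, min_eq_left (by linarith : t - 1/2 ≤ 1)]
    have hμB : μ B = ENNReal.ofReal (min (t + 1/2) 1) - ENNReal.ofReal (1/2) := by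
      have hsub : {ω | U ω ≤ 1/2} ⊆ {ω | U ω ≤ t + 1/2} := by
        intro ω hω
        simp only [Set.mem_setOf_eq] at hω ⊢
        linarith
      rw [hB, measure_diff hsub ((hmle _).nullMeasurableSet) (measure_ne_top μ _),
          hFall, hF (1/2) ⟨by norm_num, by norm_num⟩]
    have hdisj : Disjoint A B := by
      rw [Set.disjoint_left]
      rintro ω h1 ⟨_, h2⟩
      simp only [hA, Set.mem_setOf_eq] at h1
      exact h2 (by simp only [Set.mem_setOf_eq]; linarith)
    have hBm : MeasurableSet B := (hmle _).diff (hmle _)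
    rw [hset, measure_union hdisj hBm, hμA, hμB]
    rcases le_or_gt t (1/2) with hc | hc
    · rw [min_eq_left (by linarith), ENNReal.ofReal_eq_zero.2 (by linarith : t - 1/2 ≤ 0),
          zero_add, ← ENNReal.ofReal_sub _ (by norm_num : (0:ℝ) ≤ 1/2),
          show t + 1/2 - 1/2 = t by ring]
      exact ENNReal.toReal_ofReal ht0
    · rw [min_eq_right (by linarith), ← ENNReal.ofReal_sub _ (by norm_num : (0:ℝ) ≤ 1/2),
          ← ENNReal.ofReal_add (by linarith) (by norm_num),
          show t - 1/2 + (1 - 1/2) = t by ring]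
      exact ENNReal.toReal_ofReal ht0
  · -- sum
    refine ae_of_all μ fun ω => ?_
    rw [hY₁ ω, hY₂ ω, hY₃ ω]
    split_ifs <;> ring
end

section
/- If (F_i, F_j) is jointly mixable with joint center c (i.e., there exist X_i ~ F_i, X_j ~ F_j with X_i + X_j = c a.s.), and the remaining risks are constructed comonotonically as X_k = F_k^{-1}(U) for k ∉ {i,j} with the mixable pair chosen so that X_j = F_j^{-1}(1-U) and X_i = F_i^{-1}(U) sum with the rest, then S = X_1 + ... + X_d = c + Σ_{k ≠ i,j} F_k^{-1}(U), which is a nondecreasing function of U; hence X_j = F_j^{-1}(1-U) and S are antimonotonic, and E[X_j | S > VaR_p(S)] = LES_{1-p}(X_j) provided F_j is continuous and P(S > VaR_p(S)) = 1-p. -/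
/-!
Off a null set, `S = c + ∑_{k ≠ i,j} F_k⁻¹(U)` is a nondecreasing function of `U`, while
`X_j = F_j⁻¹(1 - U)` is a nonincreasing one. Hence `{S > VaR_p(S)}` and `{X_j ≤ VaR_{1-p}(X_j)}`
are, up to null sets, preimages under `U` of upper sets of `ℝ`. Upper sets of a linear order are
nested, so the two events are nested; both have probability `1 - p` (for the second one by
continuity of the distribution function of `X_j`), so they agree almost surely.
-/

open MeasureTheory

open ProbabilityTheory Filter Topology Set

theorem ae_eq_preimage_of_isUpperSet {Ω α : Type*} [MeasurableSpace Ω] {μ : Measure Ω}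
    [IsFiniteMeasure μ] [TopologicalSpace α] [MeasurableSpace α] [OpensMeasurableSpace α]
    [LinearOrder α] [OrderClosedTopology α] {f : Ω → α} (hf : Measurable f) {s t : Set α}
    (hs : IsUpperSet s) (ht : IsUpperSet t) (hst : μ (f ⁻¹' s) = μ (f ⁻¹' t)) :
    f ⁻¹' s =ᵐ[μ] f ⁻¹' t := by
  rcases hs.total ht with h | h
  · exact ae_eq_of_subset_of_measure_ge (preimage_mono h) hst.ge
      (hf hs.ordConnected.measurableSet).nullMeasurableSet (measure_ne_top _ _)
  · exact (ae_eq_of_subset_of_measure_ge (preimage_mono h) hst.le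
      (hf ht.ordConnected.measurableSet).nullMeasurableSet (measure_ne_top _ _)).symm

theorem cdf_sInf_setOf_le_cdf_eq {ν : Measure ℝ} (hcont : Continuous (cdf ν)) {q : ℝ}
    (hq : q ∈ Ioo 0 1) : cdf ν (sInf {x | q ≤ cdf ν x}) = q := by
  have hne : {x | q ≤ cdf ν x}.Nonempty :=
    ((tendsto_cdf_atTop ν).eventually (eventually_ge_nhds hq.2)).exists
  have hbdd : BddBelow {x | q ≤ cdf ν x} := by
    obtain ⟨b, hb⟩ :=
      ((tendsto_cdf_atBot ν).eventually (eventually_lt_nhds hq.1)).exists_forall_of_atBot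
    exact ⟨b, fun x hx => le_of_not_gt fun hxb => (hb x hxb.le).not_ge hx⟩
  have hlt : ∀ x < sInf {x | q ≤ cdf ν x}, cdf ν x < q := fun x hx =>
    not_le.mp (notMem_of_lt_csInf (s := {x | q ≤ cdf ν x}) hx hbdd)
  refine le_antisymm ?_ ((isClosed_le continuous_const hcont).csInf_mem hne hbdd)
  exact le_of_tendsto ((hcont.tendsto _).mono_left nhdsWithin_le_nhds :
      Tendsto (cdf ν) (𝓝[<] _) _)
    (eventually_nhdsWithin_of_forall fun x hx => (hlt x hx).le)

theorem measure_le_VaR_eq_of_continuous {Ω : Type*} [MeasurableSpace Ω] {μ : Measure Ω}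
    [IsProbabilityMeasure μ] {X : Ω → ℝ} (hX : Measurable X)
    (hcont : Continuous fun t : ℝ => (μ {ω | X ω ≤ t}).toReal) {q : ℝ} (hq : q ∈ Ioo 0 1) :
    (μ {ω | X ω ≤ VaR μ X q}).toReal = q := by
  have := Measure.isProbabilityMeasure_map (μ := μ) hX.aemeasurable
  have hF : ∀ t, (μ {ω | X ω ≤ t}).toReal = cdf (μ.map X) t := fun t => by
    rw [cdf_eq_real, measureReal_def, Measure.map_apply hX measurableSet_Iic]
    rfl
  simp only [VaR, hF] at hcont ⊢
  exact cdf_sInf_setOf_le_cdf_eq hcont hq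

theorem condExpEvent_congr_ae {Ω : Type*} [MeasurableSpace Ω] {μ : Measure Ω} {X : Ω → ℝ}
    {A B : Set Ω} (h : A =ᵐ[μ] B) : condExpEvent μ X A = condExpEvent μ X B := by
  rw [condExpEvent, condExpEvent, setIntegral_congr_set h, measure_congr h]

theorem sum_eq_center_add_sum_of_mix {ι M : Type*} [Fintype ι] [DecidableEq ι]
    [AddCommMonoid M] {i j : ι} (hij : i ≠ j) {F : ι → ℝ → M} {x : ι → M} {u : ℝ} {c : M} (hi : x i = F i u)
    (hj : x j = F j (1 - u)) (hk : ∀ k, k ≠ i → k ≠ j → x k = F k u)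
    (hmix : F i u + F j (1 - u) = c) :
    ∑ k, x k = c + ∑ k ∈ Finset.univ \ {i, j}, F k u := by
  have hrest : ∑ k ∈ Finset.univ \ {i, j}, x k = ∑ k ∈ Finset.univ \ {i, j}, F k u :=
    Finset.sum_congr rfl fun k hki => by
      simp only [Finset.mem_sdiff, Finset.mem_insert, Finset.mem_singleton, not_or] at hki
      exact hk k hki.2.1 hki.2.2
  rw [← Finset.sum_sdiff (Finset.subset_univ {i, j}), Finset.sum_pair hij, hrest, hi, hj, hmix,
    add_comm]

theorem jointly_mixable_pair_mes_eq_les_general {Ω : Type*} [MeasurableSpace Ω] (μ : Measure Ω)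
    [IsProbabilityMeasure μ] (U : Ω → ℝ) (hU : Measurable U)
    (d : ℕ) (Finv : Fin d → ℝ → ℝ) (hmono : ∀ k, Monotone (Finv k))
    (i j : Fin d) (hij : i ≠ j) (c : ℝ)
    (X : Fin d → Ω → ℝ)
    (hXj : ∀ ω, X j ω = Finv j (1 - U ω))
    (hXi : ∀ ω, X i ω = Finv i (U ω))
    (hXk : ∀ k : Fin d, k ≠ i → k ≠ j → ∀ ω, X k ω = Finv k (U ω))
    (hmix : ∀ᵐ ω ∂μ, Finv i (U ω) + Finv j (1 - U ω) = c)
    (S : Ω → ℝ) (hS : ∀ ω, S ω = ∑ k, X k ω)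
    (p : ℝ) (hp : p ∈ Set.Ioo (0 : ℝ) 1)
    (hcont : Continuous fun t : ℝ => (μ {ω | X j ω ≤ t}).toReal)
    (htail : (μ {ω | S ω > VaR μ S p}).toReal = 1 - p) :
    (∀ᵐ ω ∂μ, S ω = c + ∑ k ∈ Finset.univ \ {i, j}, Finv k (U ω)) ∧
    condExpEvent μ (X j) {ω | S ω > VaR μ S p}
      = condExpEvent μ (X j) {ω | X j ω ≤ VaR μ (X j) (1 - p)} := by
  set G : ℝ → ℝ := fun u => ∑ k ∈ Finset.univ \ {i, j}, Finv k u
  have hS_ae : ∀ᵐ ω ∂μ, S ω = c + G (U ω) := by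
    filter_upwards [hmix] with ω hω
    rw [hS]
    exact sum_eq_center_add_sum_of_mix hij (hXi ω) (hXj ω) (fun k hki hkj => hXk k hki hkj ω) hω
  have htail_ae : {ω | S ω > VaR μ S p} =ᵐ[μ] U ⁻¹' {u | VaR μ S p < c + G u} := by
    rw [eventuallyEq_set]
    filter_upwards [hS_ae] with ω hω
    rw [hω]
    rfl
  have hlow : {ω | X j ω ≤ VaR μ (X j) (1 - p)}
      = U ⁻¹' {u | Finv j (1 - u) ≤ VaR μ (X j) (1 - p)} := by
    simp only [hXj]
    rfl
  have hG : Monotone G := fun u v huv => Finset.sum_le_sum fun k _ => hmono k huv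
  have hS_upper : IsUpperSet {u | VaR μ S p < c + G u} := fun u v huv hu =>
    hu.trans_le (add_le_add_right (hG huv) c)
  have hXj_upper : IsUpperSet {u | Finv j (1 - u) ≤ VaR μ (X j) (1 - p)} := fun u v huv hu =>
    (hmono j (sub_le_sub_left huv 1)).trans hu
  have hXj_meas : Measurable (X j) :=
    funext hXj ▸ (hmono j).measurable.comp (measurable_const.sub hU)
  have hprob : μ {ω | S ω > VaR μ S p} = μ {ω | X j ω ≤ VaR μ (X j) (1 - p)} :=
    (ENNReal.toReal_eq_toReal_iff' (measure_ne_top _ _) (measure_ne_top _ _)).mp <| htail.trans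
      (measure_le_VaR_eq_of_continuous hXj_meas hcont ⟨sub_pos.mpr hp.2, sub_lt_self 1 hp.1⟩).symm
  rw [measure_congr htail_ae, hlow] at hprob
  refine ⟨hS_ae, condExpEvent_congr_ae ?_⟩
  rw [hlow]
  exact htail_ae.trans (ae_eq_preimage_of_isUpperSet hU hS_upper hXj_upper hprob)

/-- with a jointly mixable pair `(F_i, F_j)` of joint center `c`
(`F_i⁻¹(U) + F_j⁻¹(1-U) = c` a.s.) and the remaining risks comonotonic in `U`,
`S = c + ∑_{k ≠ i,j} F_k⁻¹(U)` a.s., a nondecreasing function of `U`; hence `X_j` and `S`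
are antimonotonic and `E[X_j | S > VaR_p(S)] = LES_{1-p}(X_j)` provided the CDF of `X_j`
is continuous and `P(S > VaR_p(S)) = 1 - p`. -/
theorem jointly_mixable_pair_mes_eq_les {Ω : Type*} [MeasurableSpace Ω] (μ : Measure Ω)
    [IsProbabilityMeasure μ] (U : Ω → ℝ) (hU : Measurable U)
    (hUnif : ∀ t ∈ Set.Icc (0 : ℝ) 1, (μ {ω | U ω ≤ t}).toReal = t)
    (d : ℕ) (Finv : Fin d → ℝ → ℝ) (hmono : ∀ k, Monotone (Finv k))
    (i j : Fin d) (hij : i ≠ j) (c : ℝ)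
    (X : Fin d → Ω → ℝ)
    (hXj : ∀ ω, X j ω = Finv j (1 - U ω))
    (hXi : ∀ ω, X i ω = Finv i (U ω))
    (hXk : ∀ k : Fin d, k ≠ i → k ≠ j → ∀ ω, X k ω = Finv k (U ω))
    (hmix : ∀ᵐ ω ∂μ, Finv i (U ω) + Finv j (1 - U ω) = c)
    (S : Ω → ℝ) (hS : ∀ ω, S ω = ∑ k, X k ω)
    (p : ℝ) (hp : p ∈ Set.Ioo (0 : ℝ) 1)
    (hcont : Continuous fun t : ℝ => (μ {ω | X j ω ≤ t}).toReal)
    (htail : (μ {ω | S ω > VaR μ S p}).toReal = 1 - p) :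
    (∀ᵐ ω ∂μ, S ω = c + ∑ k ∈ Finset.univ \ {i, j}, Finv k (U ω)) ∧
    condExpEvent μ (X j) {ω | S ω > VaR μ S p}
      = condExpEvent μ (X j) {ω | X j ω ≤ VaR μ (X j) (1 - p)} :=
  jointly_mixable_pair_mes_eq_les_general μ U hU d Finv hmono i j hij c X hXj hXi hXk hmix S hS p hp
    hcont htail
end
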